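/- arXiv:1103.0034 — 3 statements merged into one kernel-verified Lean document; each statement's English description precedes it below -/
import Mathlib

section
/- Let b̃ > 0 with ν̃ := 2πb̃ a positive integer, α̃ ∈ ℝ², and ψ₀(x) = Σ_{k∈ℤ} exp(ikx¹ - (2b̃x² + k + α̃₁ + iα̃₂)²/(4b̃)). Then ψ₀ satisfies the quasiperiodicity relation ψ₀(x¹+2πl₁, x²+2πl₂) = exp(-2i·ν̃·l₂·x¹)·ψ₀(x¹,x²) for all l ∈ ℤ². -/
/-- The ground-state theta-like series `ψ₀` satisfies the
quasiperiodicity relation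
`ψ₀(x¹+2πl₁, x²+2πl₂) = exp(-2iν̃l₂x¹)·ψ₀(x¹,x²)` for all `l ∈ ℤ²`,
where `ν̃ = 2πb̃` is a positive integer. -/
theorem stmt_11 (b : ℝ) (hb : 0 < b) (ν : ℕ) (hν : 0 < ν) (hbν : 2 * Real.pi * b = ν)
    (α₁ α₂ : ℝ) (ψ₀ : ℝ → ℝ → ℂ)
    (hψ₀ : ∀ x y : ℝ, ψ₀ x y = ∑' k : ℤ,
      Complex.exp (Complex.I * k * x -
        (2 * b * y + k + α₁ + Complex.I * α₂) ^ 2 / (4 * b))) :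
    ∀ (l₁ l₂ : ℤ) (x y : ℝ),
      ψ₀ (x + 2 * Real.pi * l₁) (y + 2 * Real.pi * l₂) =
        Complex.exp (-2 * Complex.I * (2 * Real.pi * b) * l₂ * x) * ψ₀ x y := by
  intro l₁ l₂ x y
  have hc : (2 * (Real.pi : ℂ) * b) = (ν : ℂ) := by exact_mod_cast hbν
  rw [hψ₀, hψ₀, ← tsum_mul_left,
    ← (Equiv.subRight ((2 * (ν : ℤ) * l₂ : ℤ))).tsum_eq]
  refine tsum_congr fun k => ?_
  simp only [Equiv.subRight_apply]
  have hsq : (2 * (b : ℂ) * (↑(y + 2 * Real.pi * l₂) : ℂ) + ((k - 2 * ν * l₂ : ℤ) : ℂ)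
      + α₁ + Complex.I * α₂) = (2 * b * y + k + α₁ + Complex.I * α₂) := by
    push_cast
    linear_combination (2 * (l₂ : ℂ)) * hc
  rw [hsq]
  have hexp : Complex.I * ((k - 2 * ν * l₂ : ℤ) : ℂ) * (↑(x + 2 * Real.pi * l₁) : ℂ) -
      (2 * b * y + k + α₁ + Complex.I * α₂) ^ 2 / (4 * b)
      = (-2 * Complex.I * (2 * Real.pi * b) * l₂ * x) +
        (Complex.I * k * x - (2 * b * y + k + α₁ + Complex.I * α₂) ^ 2 / (4 * b)) +
        ((k * l₁ - 2 * ν * l₂ * l₁ : ℤ) : ℂ) * (2 * Real.pi * Complex.I) := by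
    push_cast
    linear_combination (2 * Complex.I * (l₂ : ℂ) * x) * hc
  rw [hexp, Complex.exp_add, Complex.exp_add, Complex.exp_int_mul_two_pi_mul_I, mul_one]
end

section
/- Let a = (∂₂ - i∂₁ + 2b̃x² + α̃₁ + iα̃₂)/√(4b̃) with b̃ > 0, and let ψ₀(x) = Σ_{k∈ℤ} exp(ikx¹ - (2b̃x² + k + α̃₁ + iα̃₂)²/(4b̃)). Then a·ψ₀ = 0. -/
/-!
Write `c = α₁ + iα₂`. Completing the square in each term exhibits `ψ₀` as
`G(y) · Θ(x + iy)` with `G(y) = exp (-(2by + c)² / (4b))` and `Θ` an entire Jacobi theta function,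
`Θ(z) = θ((z + ic/(2b)) / 2π, i/(4πb))`. The operator `∂_y - i∂_x` kills every holomorphic
function of `x + iy` (Cauchy–Riemann), and `G' = -(2by + c) G` cancels the potential term.
-/

open Complex Real

section HolomorphicComposition

variable {f : ℂ → ℂ} {x y : ℝ}

lemma hasDerivAt_comp_add_ofReal_mul_I (hf : DifferentiableAt ℂ f (x + y * I)) :
    HasDerivAt (fun t : ℝ => f (x + t * I)) (deriv f (x + y * I) * I) y := by
  have hline : HasDerivAt (fun t : ℂ => (x : ℂ) + t * I) I y := by
    simpa using ((hasDerivAt_id (y : ℂ)).mul_const I).const_add (x : ℂ)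
  exact (hf.hasDerivAt.comp (y : ℂ) hline).comp_ofReal

lemma hasDerivAt_comp_ofReal_add_mul_I (hf : DifferentiableAt ℂ f (x + y * I)) :
    HasDerivAt (fun s : ℝ => f (s + y * I)) (deriv f (x + y * I)) x := by
  have hline : HasDerivAt (fun s : ℂ => s + (y : ℂ) * I) 1 x :=
    (hasDerivAt_id (x : ℂ)).add_const _
  simpa using (hf.hasDerivAt.comp (x : ℂ) hline).comp_ofReal

end HolomorphicComposition

lemma hasDerivAt_cexp_neg_sq_div {b : ℂ} (hb : b ≠ 0) (c : ℂ) (y : ℝ) :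
    HasDerivAt (fun t : ℝ => cexp (-(2 * b * t + c) ^ 2 / (4 * b)))
      (-(2 * b * y + c) * cexp (-(2 * b * y + c) ^ 2 / (4 * b))) y := by
  have hexponent :
      HasDerivAt (fun t : ℂ => -(2 * b * t + c) ^ 2 / (4 * b)) (-(2 * b * y + c)) y := by
    have hsq := (((hasDerivAt_id' (y : ℂ)).const_mul (2 * b)).add_const c).fun_pow 2
    refine hsq.fun_neg.div_const (4 * b) |>.congr_deriv ?_
    field_simp
    ring
  convert hexponent.cexp.comp_ofReal using 1
  ring

theorem deriv_snd_sub_I_mul_deriv_fst_add_mul_eq_zero {b : ℂ} (hb : b ≠ 0) (c : ℂ) {f : ℂ → ℂ}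
    {ψ : ℝ → ℝ → ℂ} (hψ : ∀ s t : ℝ, ψ s t = cexp (-(2 * b * t + c) ^ 2 / (4 * b)) * f (s + t * I))
    {x y : ℝ} (hf : DifferentiableAt ℂ f (x + y * I)) :
    deriv (fun t => ψ x t) y - I * deriv (fun s => ψ s y) x + (2 * b * y + c) * ψ x y = 0 := by
  have hψ_snd := (hasDerivAt_cexp_neg_sq_div hb c y).fun_mul (hasDerivAt_comp_add_ofReal_mul_I hf)
  have hψ_fst := (hasDerivAt_comp_ofReal_add_mul_I hf).const_mul
    (cexp (-(2 * b * y + c) ^ 2 / (4 * b)))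
  simp_rw [← hψ] at hψ_snd hψ_fst
  rw [hψ_snd.deriv, hψ_fst.deriv, hψ]
  ring

lemma tsum_cexp_eq_cexp_mul_jacobiTheta₂ {b : ℂ} (hb : b ≠ 0) (c u v : ℂ) :
    ∑' k : ℤ, cexp (I * k * u - (2 * b * v + k + c) ^ 2 / (4 * b)) =
      cexp (-(2 * b * v + c) ^ 2 / (4 * b)) *
        jacobiTheta₂ ((u + v * I + I * c / (2 * b)) / (2 * π)) (I / (4 * π * b)) := by
  rw [jacobiTheta₂, ← tsum_mul_left]
  congr 1 with k
  rw [jacobiTheta₂_term, ← Complex.exp_add]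
  congr 1
  have hπ : (π : ℂ) ≠ 0 := ofReal_ne_zero.mpr pi_ne_zero
  field_simp
  linear_combination (-2 * (4 * k * b * v + 2 * k * c + (k : ℂ) ^ 2)) * I_sq

lemma im_I_div_four_pi_mul_pos {b : ℝ} (hb : 0 < b) : 0 < (I / (4 * π * b : ℂ)).im := by
  rw [show (4 * π * b : ℂ) = ((4 * π * b : ℝ) : ℂ) by push_cast; ring, div_ofReal_im, I_im]
  positivity

/-- The lowering operator
`a = (∂₂ - i∂₁ + 2b̃x² + α̃₁ + iα̃₂)/√(4b̃)` annihilates the ground-state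
theta-like series `ψ₀`. -/
theorem stmt_12 (b : ℝ) (hb : 0 < b) (α₁ α₂ : ℝ)
    (ψ₀ : ℝ → ℝ → ℂ)
    (hψ₀ : ∀ x y : ℝ, ψ₀ x y = ∑' k : ℤ,
      Complex.exp (Complex.I * k * x -
        (2 * b * y + k + α₁ + Complex.I * α₂) ^ 2 / (4 * b)))
    (a : (ℝ → ℝ → ℂ) → (ℝ → ℝ → ℂ))
    (ha : ∀ (ψ : ℝ → ℝ → ℂ) (x y : ℝ),
      a ψ x y = (deriv (fun t => ψ x t) y - Complex.I * deriv (fun s => ψ s y) x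
          + (2 * b * y + α₁ + Complex.I * α₂) * ψ x y) / (Real.sqrt (4 * b) : ℂ)) :
    ∀ x y : ℝ, a ψ₀ x y = 0 := by
  intro x y
  have hb' : (b : ℂ) ≠ 0 := ofReal_ne_zero.mpr hb.ne'
  have hψ₀_theta (s t : ℝ) : ψ₀ s t = cexp (-(2 * b * t + (α₁ + I * α₂)) ^ 2 / (4 * b)) *
      jacobiTheta₂ ((s + t * I + I * (α₁ + I * α₂) / (2 * b)) / (2 * π)) (I / (4 * π * b)) := by
    rw [hψ₀, ← tsum_cexp_eq_cexp_mul_jacobiTheta₂ hb']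
    simp only [add_assoc]
  have hΘ : DifferentiableAt ℂ (fun z : ℂ =>
      jacobiTheta₂ ((z + I * (α₁ + I * α₂) / (2 * b)) / (2 * π)) (I / (4 * π * b))) (x + y * I) :=
    (differentiableAt_jacobiTheta₂_fst _ (im_I_div_four_pi_mul_pos hb)).comp _ (by fun_prop)
  rw [ha, div_eq_zero_iff, add_assoc]
  exact .inl (deriv_snd_sub_I_mul_deriv_fst_add_mul_eq_zero hb' _ hψ₀_theta hΘ)
end

section
/- Let Ā be antisymmetric with 2πqĀ integer-valued, V(l,x) = exp(-2πiq·lᵗĀx), and let ψ satisfy ψ(x+2πl) = V(l,x)ψ(x). Then for any z̃ = (z⁰,z) ∈ ℝ^{n+1}, the function (g_{z̃}ψ)(x) = exp(iq(z⁰ + xᵗĀz + αᵗz))ψ(x+z) also satisfies the same quasiperiodicity condition (g_{z̃}ψ)(x+2πl) = V(l,x)(g_{z̃}ψ)(x). -/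
open Matrix

/-- If `ψ` is quasiperiodic with factor
`V(l,x) = exp(-2πiq·lᵗĀx)` (with `Ā` antisymmetric and `2πqĀ` integer-valued),
then `g_{z̃}ψ` with `(g_{z̃}ψ)(x) = exp(iq(z0 + xᵗĀz + αᵗz))·ψ(x+z)` satisfies
the same quasiperiodicity condition. -/
theorem stmt_17 (n : ℕ) (A : Matrix (Fin n) (Fin n) ℝ) (hA : Aᵀ = -A)
    (q : ℤ) (α : Fin n → ℝ)
    (hint : ∀ a b : Fin n, ∃ m : ℤ, 2 * Real.pi * (q : ℝ) * A a b = m)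
    (V : (Fin n → ℤ) → (Fin n → ℝ) → ℂ)
    (hV : ∀ l x, V l x = Complex.exp (-2 * Real.pi * Complex.I * q *
      ((fun i => (l i : ℝ)) ⬝ᵥ (A *ᵥ x))))
    (ψ : (Fin n → ℝ) → ℂ)
    (hψ : ∀ (l : Fin n → ℤ) (x : Fin n → ℝ),
      ψ (x + fun i => 2 * Real.pi * (l i)) = V l x * ψ x)
    (z0 : ℝ) (z : Fin n → ℝ) (gψ : (Fin n → ℝ) → ℂ)
    (hgψ : ∀ x : Fin n → ℝ, gψ x = Complex.exp (Complex.I * q *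
        ((z0 : ℂ) + (x ⬝ᵥ (A *ᵥ z) : ℝ) + (α ⬝ᵥ z : ℝ))) * ψ (x + z)) :
    ∀ (l : Fin n → ℤ) (x : Fin n → ℝ),
      gψ (x + fun i => 2 * Real.pi * (l i)) = V l x * gψ x := by
  intro l x
  have hcomm : (x + fun i => 2 * Real.pi * (l i : ℝ)) + z
      = (x + z) + fun i => 2 * Real.pi * (l i : ℝ) := by
    funext i; simp; ring
  rw [hgψ, hgψ, hcomm, hψ l (x + z), hV, hV]
  have hdot : (x + fun i => 2 * Real.pi * (l i : ℝ)) ⬝ᵥ (A *ᵥ z)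
      = x ⬝ᵥ (A *ᵥ z) + 2 * Real.pi * ((fun i => (l i : ℝ)) ⬝ᵥ (A *ᵥ z)) := by
    rw [add_dotProduct]
    congr 1
    rw [show (fun i => 2 * Real.pi * (l i : ℝ)) = (2 * Real.pi) • (fun i => (l i : ℝ)) by
      funext i; simp [smul_eq_mul], smul_dotProduct, smul_eq_mul]
  have hdot2 : (fun i => (l i : ℝ)) ⬝ᵥ (A *ᵥ (x + z))
      = (fun i => (l i : ℝ)) ⬝ᵥ (A *ᵥ x) + (fun i => (l i : ℝ)) ⬝ᵥ (A *ᵥ z) := by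
    rw [mulVec_add, dotProduct_add]
  rw [hdot, hdot2]
  rw [← mul_assoc, ← mul_assoc, ← Complex.exp_add, ← Complex.exp_add]
  congr 2
  push_cast
  ring
end
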